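/- arXiv:2411.02962 — 5 statements merged into one kernel-verified Lean document; each statement's English description precedes it below -/
import Mathlib

section
/- Let T be a bounded operator on H. Then B∘T∘S = T if and only if for all integers m, n ≥ 1 one has (m+1)·⟨T e_n, e_m⟩ = m·⟨T e_{n+1}, e_{m+1}⟩ (i.e. the matrix entries t_{m,n} = ⟨T e_n, e_m⟩/‖e_m‖² satisfy t_{m,n} = t_{m+1,n+1} for all m, n ≥ 1, so T satisfies the Brown–Halmos identity exactly when its matrix in the basis {e_n} is a Toeplitz matrix). -/
open scoped ComplexConjugate

local notation "⟪" x ", " y "⟫" => @inner ℂ _ _ x y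

lemma aux_ext {H : Type*} [NormedAddCommGroup H] [InnerProductSpace ℂ H]
    [CompleteSpace H] (e : ℕ → H)
    (hdense : Dense (Submodule.span ℂ (e '' {n : ℕ | 1 ≤ n}) : Set H))
    {x : H} (h : ∀ m : ℕ, 1 ≤ m → ⟪e m, x⟫ = 0) : x = 0 := by
  set K := Submodule.span ℂ (e '' {n : ℕ | 1 ≤ n})
  have hK : K.topologicalClosure = ⊤ :=
    Submodule.dense_iff_topologicalClosure_eq_top.mp hdense
  have hbot : Kᗮ = ⊥ := Submodule.topologicalClosure_eq_top_iff.mp hK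
  have hx : x ∈ Kᗮ := by
    rw [Submodule.mem_orthogonal]
    intro u hu
    induction hu using Submodule.span_induction with
    | mem u hu => obtain ⟨n, hn, rfl⟩ := hu; exact h n hn
    | zero => simp
    | add u v _ _ hu hv => rw [inner_add_left, hu, hv, add_zero]
    | smul a u _ hu => rw [inner_smul_left, hu, mul_zero]
  rw [hbot] at hx
  simpa using hx

lemma aux_key {H : Type*} [NormedAddCommGroup H] [InnerProductSpace ℂ H]
    (e : ℕ → H)
    (horth : ∀ m n : ℕ, 1 ≤ m → 1 ≤ n → ⟪e m, e n⟫ = if m = n then (m : ℂ) else 0)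
    (hdense : Dense (Submodule.span ℂ (e '' {n : ℕ | 1 ≤ n}) : Set H))
    (B : H →L[ℂ] H)
    (hB1 : B (e 1) = 0)
    (hB : ∀ n : ℕ, 1 ≤ n → B (e (n + 1)) = e n)
    (m : ℕ) (hm : 1 ≤ m) (y : H) :
    ⟪e m, B y⟫ = ((m : ℂ) / ((m : ℂ) + 1)) * ⟪e (m + 1), y⟫ := by
  have hm1 : ((m : ℂ) + 1) ≠ 0 := by
    exact_mod_cast Nat.succ_ne_zero m
  have key : (innerSL ℂ (e m)).comp B
      = ((m : ℂ) / ((m : ℂ) + 1)) • innerSL ℂ (e (m + 1)) := by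
    apply ContinuousLinearMap.ext_on hdense
    rintro x ⟨n, hn, rfl⟩
    simp only [Set.mem_setOf_eq] at hn
    simp only [ContinuousLinearMap.comp_apply, ContinuousLinearMap.coe_smul',
      Pi.smul_apply, innerSL_apply_apply, smul_eq_mul]
    match n, hn with
    | 1, _ =>
      rw [hB1, inner_zero_right, horth (m+1) 1 (by omega) (by omega)]
      rw [if_neg (by omega)]
      ring
    | (k+2), _ =>
      rw [hB (k+1) (by omega), horth m (k+1) hm (by omega),
        horth (m+1) (k+2) (by omega) (by omega)]
      by_cases hmk : m = k + 1
      · rw [if_pos hmk, if_pos (by omega)]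
        push_cast
        field_simp
      · rw [if_neg hmk, if_neg (by omega), mul_zero]
  calc ⟪e m, B y⟫ = ((innerSL ℂ (e m)).comp B) y := rfl
    _ = (((m : ℂ) / ((m : ℂ) + 1)) • innerSL ℂ (e (m + 1))) y := by rw [key]
    _ = ((m : ℂ) / ((m : ℂ) + 1)) * ⟪e (m + 1), y⟫ := rfl

theorem statement5 {H : Type*} [NormedAddCommGroup H] [InnerProductSpace ℂ H]
    [CompleteSpace H]
    (e : ℕ → H)
    (horth : ∀ m n : ℕ, 1 ≤ m → 1 ≤ n → ⟪e m, e n⟫ = if m = n then (m : ℂ) else 0)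
    (hdense : Dense (Submodule.span ℂ (e '' {n : ℕ | 1 ≤ n}) : Set H))
    -- the forward shift `S = T_z` and the backward shift `B = T_z̄`
    (S B : H →L[ℂ] H)
    (hS : ∀ n : ℕ, 1 ≤ n → S (e n) = e (n + 1))
    (hB1 : B (e 1) = 0)
    (hB : ∀ n : ℕ, 1 ≤ n → B (e (n + 1)) = e n)
    (T : H →L[ℂ] H) :
    B ∘L (T ∘L S) = T ↔
      ∀ m n : ℕ, 1 ≤ m → 1 ≤ n →
        ((m : ℂ) + 1) * ⟪e m, T (e n)⟫ = (m : ℂ) * ⟪e (m + 1), T (e (n + 1))⟫ := by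
  have key := aux_key e horth hdense B hB1 hB
  constructor
  · intro hT m n hm hn
    have hm1 : ((m : ℂ) + 1) ≠ 0 := by exact_mod_cast Nat.succ_ne_zero m
    have h1 : B (T (S (e n))) = T (e n) := by
      have := congrArg (fun A : H →L[ℂ] H => A (e n)) hT
      simpa using this
    rw [hS n hn] at h1
    have h2 : ⟪e m, B (T (e (n+1)))⟫ = ⟪e m, T (e n)⟫ := by rw [h1]
    rw [key m hm (T (e (n+1)))] at h2
    rw [← h2]
    field_simp
  · intro h
    apply ContinuousLinearMap.ext_on hdense
    rintro x ⟨n, hn, rfl⟩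
    simp only [Set.mem_setOf_eq] at hn
    simp only [ContinuousLinearMap.comp_apply]
    rw [hS n hn]
    have : ∀ m : ℕ, 1 ≤ m → ⟪e m, B (T (e (n+1))) - T (e n)⟫ = 0 := by
      intro m hm
      have hm1 : ((m : ℂ) + 1) ≠ 0 := by exact_mod_cast Nat.succ_ne_zero m
      rw [inner_sub_right, key m hm, sub_eq_zero, div_mul_eq_mul_div,
        div_eq_iff hm1]
      linear_combination -(h m n hm hn)
    have h0 := aux_ext e hdense this
    rw [sub_eq_zero] at h0
    exact h0
end

section
/- Let T be a bounded operator on H that has Toeplitz matrix with coefficient sequence c : ℤ → ℂ. Then: (i) |c(k)| ≤ ‖T‖/√(k+1) for every k ≥ 0 and |c(−k)| ≤ √(k+1)·‖T‖ for every k ≥ 0; (ii) for every z in the open unit disc 𝔻 the series Σ_{k≥1} c(k) z^k and Σ_{k≥0} c(−k) conj(z)^k are absolutely summable, so that φ(z) := Σ_{k≥1} c(k) z^k + Σ_{k≥0} c(−k) conj(z)^k is the sum of a holomorphic function and a conjugate-holomorphic function on 𝔻 (hence harmonic on 𝔻); (iii) Σ_{k≥1} k·|c(k)|² < ∞ (i.e.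 the holomorphic part z ↦ Σ_{k≥1} c(k) z^k belongs to the Dirichlet space 𝒟₀). -/
/-!
Pairing `T` with the basis gives `⟪e m, T (e n)⟫ = m c(m - n)`, so Cauchy–Schwarz together with
`‖e n‖ = √n` bounds the coefficients (i); in particular they grow at most linearly, which gives the
absolute convergence on the disc (ii). For (iii), the Fourier coefficients of `T (e 1)` with respect
to the orthonormal family `e (k + 1) / √(k + 1)` are `√(k + 1) c(k)`, so Bessel's inequality gives
`∑ (k + 1) ‖c k‖² < ∞`.
-/

open scoped ComplexConjugate

local notation "⟪" x ", " y "⟫" => @inner ℂ _ _ x y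

lemma summable_norm_mul_pow_of_norm_le_mul_succ {𝕜 : Type*} [NormedDivisionRing 𝕜]
    {a : ℕ → 𝕜} {C : ℝ} (ha : ∀ k, ‖a k‖ ≤ C * (k + 1)) {z : 𝕜} (hz : ‖z‖ < 1) :
    Summable fun k => ‖a k * z ^ k‖ := by
  have hgeom : Summable fun k : ℕ => ((k : ℝ) + 1) * ‖z‖ ^ k := by
    have hlin : Summable fun k : ℕ => (k : ℝ) * ‖z‖ ^ k := by
      simpa using summable_pow_mul_geometric_of_norm_lt_one 1 (by simpa using hz)
    simpa [add_mul] using hlin.add (summable_geometric_of_lt_one (norm_nonneg z) hz)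
  refine (hgeom.mul_left C).of_nonneg_of_le (fun k => norm_nonneg _) fun k => ?_
  rw [norm_mul, norm_pow, ← mul_assoc]
  gcongr
  exact ha k

/-- The Gram matrix of the monomials `zⁿ` of `𝒟₀`; only the indices `n ≥ 1` are constrained. -/
def IsDirichletMonomialFamily {H : Type*} [NormedAddCommGroup H] [InnerProductSpace ℂ H]
    (e : ℕ → H) : Prop :=
  ∀ m n : ℕ, 1 ≤ m → 1 ≤ n → ⟪e m, e n⟫ = if m = n then (m : ℂ) else 0

namespace IsDirichletMonomialFamily

variable {H : Type*} [NormedAddCommGroup H] [InnerProductSpace ℂ H] {e : ℕ → H}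

lemma norm_eq_sqrt (he : IsDirichletMonomialFamily e) {n : ℕ} (hn : 1 ≤ n) : ‖e n‖ = √n := by
  have hsq : ‖e n‖ ^ 2 = n := by
    rw [← inner_self_eq_norm_sq (𝕜 := ℂ), he n n hn hn, if_pos rfl, RCLike.natCast_re]
  rw [← hsq, Real.sqrt_sq (norm_nonneg _)]

lemma orthonormal_inv_sqrt_smul (he : IsDirichletMonomialFamily e) :
    Orthonormal ℂ fun k : ℕ => ((√(k + 1) : ℝ) : ℂ)⁻¹ • e (k + 1) := by
  rw [orthonormal_iff_ite]
  intro i j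
  rw [inner_smul_left, inner_smul_right, he _ _ (by omega) (by omega)]
  by_cases hij : i = j
  · subst hij
    have hsqrt : ((√(i + 1) : ℝ) : ℂ) ^ 2 = ((i + 1 : ℕ) : ℂ) := by
      rw [← Complex.ofReal_pow, Real.sq_sqrt (by positivity)]
      push_cast
      rfl
    have hne : ((√(i + 1) : ℝ) : ℂ) ≠ 0 := by
      exact_mod_cast (Real.sqrt_pos.2 (by positivity : (0 : ℝ) < i + 1)).ne'
    simp only [if_true, map_inv₀, Complex.conj_ofReal]
    rw [← hsqrt]
    field_simp
  · simp [hij]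

lemma summable_norm_inner_sq_div (he : IsDirichletMonomialFamily e) (x : H) :
    Summable fun k : ℕ => ‖⟪e (k + 1), x⟫‖ ^ 2 / (k + 1) := by
  refine (he.orthonormal_inv_sqrt_smul.inner_products_summable x).congr fun k => ?_
  rw [inner_smul_left, norm_mul, map_inv₀, Complex.conj_ofReal, norm_inv, Complex.norm_real,
    Real.norm_of_nonneg (Real.sqrt_nonneg _), mul_pow, inv_pow, Real.sq_sqrt (by positivity)]
  ring

end IsDirichletMonomialFamily

def HasToeplitzMatrix {H : Type*} [NormedAddCommGroup H] [InnerProductSpace ℂ H]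
    (e : ℕ → H) (T : H →L[ℂ] H) (c : ℤ → ℂ) : Prop :=
  ∀ m n : ℕ, 1 ≤ m → 1 ≤ n → ⟪e m, T (e n)⟫ = (m : ℂ) * c ((m : ℤ) - n)

namespace HasToeplitzMatrix

variable {H : Type*} [NormedAddCommGroup H] [InnerProductSpace ℂ H] {e : ℕ → H}
  {T : H →L[ℂ] H} {c : ℤ → ℂ}

lemma mul_norm_coeff_le (hT : HasToeplitzMatrix e T c) (he : IsDirichletMonomialFamily e)
    {m n : ℕ} (hm : 1 ≤ m) (hn : 1 ≤ n) : m * ‖c ((m : ℤ) - n)‖ ≤ √m * √n * ‖T‖ := by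
  calc (m : ℝ) * ‖c ((m : ℤ) - n)‖ = ‖⟪e m, T (e n)⟫‖ := by
        rw [hT m n hm hn, norm_mul, Complex.norm_natCast]
    _ ≤ ‖e m‖ * (‖T‖ * ‖e n‖) := by grw [norm_inner_le_norm, T.le_opNorm]
    _ = √m * √n * ‖T‖ := by
        rw [he.norm_eq_sqrt hm, he.norm_eq_sqrt hn]
        ring

lemma norm_coeff_natCast_le (hT : HasToeplitzMatrix e T c) (he : IsDirichletMonomialFamily e)
    (k : ℕ) : ‖c k‖ ≤ ‖T‖ / √(k + 1) := by
  have h := hT.mul_norm_coeff_le he (m := k + 1) (n := 1) (by omega) le_rfl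
  push_cast at h
  rw [add_sub_cancel_right, Real.sqrt_one, mul_one] at h
  have hpos : 0 < √((k : ℝ) + 1) := Real.sqrt_pos.2 (by positivity)
  rw [le_div_iff₀ hpos]
  refine le_of_mul_le_mul_left ?_ hpos
  calc √((k : ℝ) + 1) * (‖c k‖ * √(k + 1)) = (√(k + 1) * √(k + 1)) * ‖c k‖ := by ring
    _ = (k + 1) * ‖c k‖ := by rw [Real.mul_self_sqrt (by positivity)]
    _ ≤ √(k + 1) * ‖T‖ := h

lemma norm_coeff_neg_le (hT : HasToeplitzMatrix e T c) (he : IsDirichletMonomialFamily e)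
    (k : ℕ) : ‖c (-(k : ℤ))‖ ≤ √(k + 1) * ‖T‖ := by
  simpa using hT.mul_norm_coeff_le he (m := 1) (n := k + 1) le_rfl (by omega)

lemma summable_mul_norm_coeff_sq (hT : HasToeplitzMatrix e T c)
    (he : IsDirichletMonomialFamily e) : Summable fun k : ℕ => ((k : ℝ) + 1) * ‖c k‖ ^ 2 := by
  refine (he.summable_norm_inner_sq_div (T (e 1))).congr fun k => ?_
  rw [hT (k + 1) 1 (by omega) le_rfl, norm_mul, Complex.norm_natCast]
  push_cast
  field_simp
  ring_nf

end HasToeplitzMatrix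

theorem statement6_general {H : Type*} [NormedAddCommGroup H] [InnerProductSpace ℂ H]
    (e : ℕ → H)
    (horth : ∀ m n : ℕ, 1 ≤ m → 1 ≤ n → ⟪e m, e n⟫ = if m = n then (m : ℂ) else 0)
    (T : H →L[ℂ] H) (c : ℤ → ℂ)
    (hT : ∀ m n : ℕ, 1 ≤ m → 1 ≤ n → ⟪e m, T (e n)⟫ = (m : ℂ) * c ((m : ℤ) - n)) :
    -- (i) coefficient bounds
    (∀ k : ℕ,
      ‖c k‖ ≤ ‖T‖ / Real.sqrt (k + 1) ∧ ‖c (-(k : ℤ))‖ ≤ Real.sqrt (k + 1) * ‖T‖) ∧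
    -- (ii) absolute summability of the two series defining the symbol on the disc
    (∀ z ∈ Metric.ball (0 : ℂ) 1,
      Summable (fun k : ℕ => ‖c ((k : ℤ) + 1) * z ^ (k + 1)‖) ∧
      Summable (fun k : ℕ => ‖c (-(k : ℤ)) * (conj z) ^ k‖)) ∧
    -- (iii) the holomorphic part lies in the Dirichlet space
    Summable (fun k : ℕ => ((k : ℝ) + 1) * ‖c ((k : ℤ) + 1)‖ ^ 2) := by
  have he : IsDirichletMonomialFamily e := horth
  have hToep : HasToeplitzMatrix e T c := hT
  have hpos := hToep.norm_coeff_natCast_le he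
  have hneg := hToep.norm_coeff_neg_le he
  have hsqrt (k : ℕ) : 1 ≤ √((k : ℝ) + 1) ∧ √((k : ℝ) + 1) ≤ k + 1 := by
    constructor <;> simp
  refine ⟨fun k => ⟨hpos k, hneg k⟩, fun z hz => ?_, ?_⟩
  · have hz1 : ‖z‖ < 1 := mem_ball_zero_iff.1 hz
    constructor
    · have hlin (k : ℕ) : ‖c k‖ ≤ ‖T‖ * (k + 1) :=
        (hpos k).trans <| (div_le_self (norm_nonneg T) (hsqrt k).1).trans <|
          le_mul_of_one_le_right (norm_nonneg T) (by linarith)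
      simpa using (summable_nat_add_iff 1).2 (summable_norm_mul_pow_of_norm_le_mul_succ hlin hz1)
    · have hlin (k : ℕ) : ‖c (-(k : ℤ))‖ ≤ ‖T‖ * (k + 1) :=
        (hneg k).trans <| by rw [mul_comm]; gcongr; exact (hsqrt k).2
      exact summable_norm_mul_pow_of_norm_le_mul_succ hlin (by rwa [RCLike.norm_conj])
  · refine ((summable_nat_add_iff 1).2 (hToep.summable_mul_norm_coeff_sq he)).of_nonneg_of_le
      (fun k => by positivity) fun k => ?_
    push_cast
    gcongr
    linarith

theorem statement6 {H : Type*} [NormedAddCommGroup H] [InnerProductSpace ℂ H]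
    [CompleteSpace H]
    (e : ℕ → H)
    (horth : ∀ m n : ℕ, 1 ≤ m → 1 ≤ n → ⟪e m, e n⟫ = if m = n then (m : ℂ) else 0)
    (hdense : Dense (Submodule.span ℂ (e '' {n : ℕ | 1 ≤ n}) : Set H))
    (T : H →L[ℂ] H) (c : ℤ → ℂ)
    (hT : ∀ m n : ℕ, 1 ≤ m → 1 ≤ n → ⟪e m, T (e n)⟫ = (m : ℂ) * c ((m : ℤ) - n)) :
    -- (i) coefficient bounds
    (∀ k : ℕ,
      ‖c k‖ ≤ ‖T‖ / Real.sqrt (k + 1) ∧ ‖c (-(k : ℤ))‖ ≤ Real.sqrt (k + 1) * ‖T‖) ∧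
    -- (ii) absolute summability of the two series defining the symbol on the disc
    (∀ z ∈ Metric.ball (0 : ℂ) 1,
      Summable (fun k : ℕ => ‖c ((k : ℤ) + 1) * z ^ (k + 1)‖) ∧
      Summable (fun k : ℕ => ‖c (-(k : ℤ)) * (conj z) ^ k‖)) ∧
    -- (iii) the holomorphic part lies in the Dirichlet space
    Summable (fun k : ℕ => ((k : ℝ) + 1) * ‖c ((k : ℤ) + 1)‖ ^ 2) :=
  statement6_general e horth T c hT
end

section
/- Let T₁ and T₂ be bounded operators on H satisfying B∘T₁∘S = T₁ and B∘T₂∘S = T₂. Then B∘(T₁∘T₂)∘S = T₁∘T₂ + R, where R is the rank-one operator R f = ⟨f, S*(T₂*(e₁))⟩ · (B(T₁(e₁))) (here S*, T₂* denote Hilbert-space adjoints; note ‖e₁‖ = 1). Equivalently, T_{z̄} T_ψ T_φ T_z = T_ψ T_φ + (T_{z̄} T_ψ z) ⊗ (T_z* T_φ* z) for Toeplitz operators on the Dirichlet space. -/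
/-!
`S B` fixes `e₂, e₃, …` and kills the unit vector `e₁ ⊥ e₂, e₃, …`, so by density
`S B = 1 - e₁ ⊗ e₁`. Writing `B T₁ T₂ S = B T₁ (S B + e₁ ⊗ e₁) T₂ S` and using `B Tᵢ S = Tᵢ`
gives `T₁ T₂` plus the rank-one term `B T₁ e₁ ⊗ S* T₂* e₁`.
-/

open scoped ComplexConjugate

local notation "⟪" x ", " y "⟫" => @inner ℂ _ _ x y

open scoped InnerProductSpace

theorem backward_comp_mul_comp_shift_eq_add {R M : Type*} [Ring R] [AddCommGroup M]
    [Module R M] (S B T₁ T₂ : M →ₗ[R] M) (φ : M → R) (u : M)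
    (hSB : ∀ x, S (B x) = x - φ x • u)
    (h1 : ∀ x, B (T₁ (S x)) = T₁ x) (h2 : ∀ x, B (T₂ (S x)) = T₂ x) (f : M) :
    B (T₁ (T₂ (S f))) = T₁ (T₂ f) + φ (T₂ (S f)) • B (T₁ u) := by
  have hsplit : T₂ (S f) = S (T₂ f) + φ (T₂ (S f)) • u := by
    rw [← h2 f, hSB, sub_add_cancel]
  conv_lhs => rw [hsplit, map_add, map_add, h1, map_smul, map_smul]

theorem shift_comp_backward_eq_id_sub {𝕜 E : Type*} [RCLike 𝕜] [NormedAddCommGroup E]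
    [InnerProductSpace 𝕜 E] (e : ℕ → E) (he₁ : ⟪e 1, e 1⟫_𝕜 = 1)
    (horth : ∀ n : ℕ, 2 ≤ n → ⟪e 1, e n⟫_𝕜 = 0)
    (hdense : Dense (Submodule.span 𝕜 (e '' {n : ℕ | 1 ≤ n}) : Set E))
    (S B : E →L[𝕜] E) (hS : ∀ n : ℕ, 1 ≤ n → S (e n) = e (n + 1))
    (hB1 : B (e 1) = 0) (hB : ∀ n : ℕ, 1 ≤ n → B (e (n + 1)) = e n) :
    S ∘L B = ContinuousLinearMap.id 𝕜 E - (innerSL 𝕜 (e 1)).smulRight (e 1) := by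
  refine ContinuousLinearMap.ext_on hdense ?_
  rintro _ ⟨n, hn : 1 ≤ n, rfl⟩
  obtain rfl | ⟨k, hk, rfl⟩ : n = 1 ∨ ∃ k, 1 ≤ k ∧ n = k + 1 :=
    (Nat.eq_or_lt_of_le hn).imp Eq.symm fun h => ⟨n - 1, by omega, by omega⟩
  all_goals simp only [ContinuousLinearMap.comp_apply, sub_apply,
    ContinuousLinearMap.id_apply, ContinuousLinearMap.smulRight_apply, innerSL_apply_apply]
  · rw [hB1, he₁, map_zero, one_smul, sub_self]
  · rw [hB k hk, hS k hk, horth (k + 1) (by omega), zero_smul, sub_zero]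

theorem statement10 {H : Type*} [NormedAddCommGroup H] [InnerProductSpace ℂ H]
    [CompleteSpace H]
    (e : ℕ → H)
    (horth : ∀ m n : ℕ, 1 ≤ m → 1 ≤ n → ⟪e m, e n⟫ = if m = n then (m : ℂ) else 0)
    (hdense : Dense (Submodule.span ℂ (e '' {n : ℕ | 1 ≤ n}) : Set H))
    (S B : H →L[ℂ] H)
    (hS : ∀ n : ℕ, 1 ≤ n → S (e n) = e (n + 1))
    (hB1 : B (e 1) = 0)
    (hB : ∀ n : ℕ, 1 ≤ n → B (e (n + 1)) = e n)
    (T₁ T₂ : H →L[ℂ] H)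
    (h1 : B ∘L (T₁ ∘L S) = T₁) (h2 : B ∘L (T₂ ∘L S) = T₂) :
    -- `B (T₁ T₂) S = T₁ T₂ + R` where `R f = ⟨f, S*(T₂* e₁)⟩ · B (T₁ e₁)`
    -- (the paper's inner product `⟨a, b⟩`, linear in the first slot, is `⟪b, a⟫` here).
    ∀ f : H,
      (B ∘L ((T₁ ∘L T₂) ∘L S)) f
        = (T₁ ∘L T₂) f +
          ⟪(ContinuousLinearMap.adjoint S) ((ContinuousLinearMap.adjoint T₂) (e 1)), f⟫ •
            (B (T₁ (e 1))) := by
  intro f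
  have hSB := shift_comp_backward_eq_id_sub e (by simpa using horth 1 1 le_rfl le_rfl)
    (fun n hn => by simpa [show 1 ≠ n by omega] using horth 1 n le_rfl (by omega))
    hdense S B hS hB1 hB
  have key := backward_comp_mul_comp_shift_eq_add S.toLinearMap B T₁ T₂ (⟪e 1, ·⟫) (e 1)
    (fun x => by simpa using congr($hSB x)) (fun x => congr($h1 x)) (fun x => congr($h2 x)) f
  simpa [ContinuousLinearMap.adjoint_inner_left] using key
end

section
/- Let T₁ and T₂ be bounded operators on H having Toeplitz matrices with coefficient sequences b : ℤ → ℂ and c : ℤ → ℂ respectively. Then B∘(T₁∘T₂)∘S = T₁∘T₂ (i.e. the product T₁ T₂ is again a Toeplitz operator) if and only if b(k) = 0 for all k ≥ 1 or c(−k) = 0 for all k ≥ 1 (i.e. the first symbol is antiholomorphic or the second symbol is holomorphic). -/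
/-!
Since `(e n)` is a complete orthogonal family with `⟪e k, e k⟫ = k`, Parseval's identity gives the
matrix of the product as `⟪e m, T₁ T₂ e n⟫ = m * ∑_{k ≥ 1} b (m - k) * c (k - n)`. On the other
hand `⟪e m, B X S e n⟫ = m / (m + 1) * ⟪e (m + 1), X e (n + 1)⟫`, so for `X = T₁ T₂` the same
series appears with the summation index shifted by one: it gains exactly the term `k = 0`, i.e.
`⟪e m, B T₁ T₂ S e n⟫ = ⟪e m, T₁ T₂ e n⟫ + m * b m * c (-n)`. Hence `B T₁ T₂ S = T₁ T₂` iff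
`b m * c (-n) = 0` for all `m, n ≥ 1`.
-/

open scoped ComplexConjugate

local notation "⟪" x ", " y "⟫" => @inner ℂ _ _ x y


open Submodule

section InnerProductSpace

variable {𝕜 E ι : Type*} [RCLike 𝕜] [NormedAddCommGroup E] [InnerProductSpace 𝕜 E]

theorem eq_of_inner_right_of_dense_span {s : Set E} (hs : Dense (span 𝕜 s : Set E)) {x y : E}
    (h : ∀ u ∈ s, inner 𝕜 u x = inner 𝕜 u y) : x = y := by
  have hspan : span 𝕜 s ≤ (𝕜 ∙ (x - y))ᗮ := span_le.2 fun u hu => by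
    simp [mem_orthogonal_singleton_iff_inner_left, inner_sub_right, h u hu]
  refine hs.eq_of_inner_right 𝕜 fun w hw => sub_eq_zero.1 ?_
  rw [← inner_sub_right]
  exact mem_orthogonal_singleton_iff_inner_left.1 (hspan hw)

theorem ContinuousLinearMap.ext_iff_inner_of_dense_span {s : Set E}
    (hs : Dense (span 𝕜 s : Set E)) {A A' : E →L[𝕜] E} :
    A = A' ↔ ∀ u ∈ s, ∀ v ∈ s, inner 𝕜 u (A v) = inner 𝕜 u (A' v) := by
  refine ⟨fun h => by simp [h], fun h => ContinuousLinearMap.ext_on hs fun v hv => ?_⟩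
  exact eq_of_inner_right_of_dense_span hs fun u hu => h u hu v hv

theorem hasSum_inner_mul_inner_div_of_orthogonal [CompleteSpace E] {v : ι → E}
    (hv : Pairwise fun i j => inner 𝕜 (v i) (v j) = 0) (hv0 : ∀ i, v i ≠ 0)
    (hdense : Dense (span 𝕜 (Set.range v) : Set E)) (x y : E) :
    HasSum (fun i => inner 𝕜 x (v i) * inner 𝕜 (v i) y / inner 𝕜 (v i) (v i)) (inner 𝕜 x y) := by
  have hnorm : ∀ i, (‖v i‖ : 𝕜) ≠ 0 := fun i => RCLike.ofReal_ne_zero.2 (norm_ne_zero_iff.2 (hv0 i))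
  set u : ι → E := fun i => (‖v i‖ : 𝕜)⁻¹ • v i with hu
  have hon : Orthonormal 𝕜 u := by
    refine ⟨fun i => norm_smul_inv_norm (hv0 i), fun i j hij => ?_⟩
    simp [hu, inner_smul_left, inner_smul_right, hv hij]
  have hspan : span 𝕜 (Set.range v) ≤ span 𝕜 (Set.range u) := span_le.2 <| by
    rintro _ ⟨i, rfl⟩
    have hvi : v i = (‖v i‖ : 𝕜) • u i := by simp [hu, smul_smul, mul_inv_cancel₀ (hnorm i)]
    rw [hvi]
    exact smul_mem _ _ (subset_span ⟨i, rfl⟩)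
  have hsp : ⊤ ≤ (span 𝕜 (Set.range u)).topologicalClosure := fun z _ =>
    closure_mono hspan (hdense z)
  have hbasis := (HilbertBasis.mk hon hsp).hasSum_inner_mul_inner x y
  rw [HilbertBasis.coe_mk] at hbasis
  refine hbasis.congr_fun fun i => ?_
  have := hnorm i
  simp only [hu, inner_smul_left, inner_smul_right, inner_self_eq_norm_sq_to_K, map_inv₀,
    RCLike.conj_ofReal]
  field_simp

end InnerProductSpace

theorem forall_mul_eq_zero_iff {α β M₀ : Type*} [MulZeroClass M₀] [NoZeroDivisors M₀]
    {p : α → Prop} {q : β → Prop} {f : α → M₀} {g : β → M₀} :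
    (∀ i, p i → ∀ j, q j → f i * g j = 0) ↔ (∀ i, p i → f i = 0) ∨ (∀ j, q j → g j = 0) := by
  refine ⟨fun h => ?_, ?_⟩
  · by_contra! hne
    obtain ⟨⟨i, hi, hfi⟩, ⟨j, hj, hgj⟩⟩ := hne
    exact mul_ne_zero hfi hgj (h i hi j hj)
  · rintro (hf | hg) i hi j hj
    · simp [hf i hi]
    · simp [hg j hj]

theorem Set.range_comp_succ {α : Type*} (e : ℕ → α) :
    Set.range (fun k => e (k + 1)) = e '' {n | 1 ≤ n} := by
  refine (Set.range_comp e Nat.succ).trans ?_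
  rw [Nat.range_succ]
  rfl

section DirichletSpace

variable {H : Type*} [NormedAddCommGroup H] [InnerProductSpace ℂ H] [CompleteSpace H] {e : ℕ → H}

theorem inner_backwardShift_right
    (horth : ∀ m n : ℕ, 1 ≤ m → 1 ≤ n → ⟪e m, e n⟫ = if m = n then (m : ℂ) else 0)
    (hdense : Dense (Submodule.span ℂ (e '' {n : ℕ | 1 ≤ n}) : Set H))
    {B : H →L[ℂ] H} (hB1 : B (e 1) = 0) (hB : ∀ n : ℕ, 1 ≤ n → B (e (n + 1)) = e n)
    {m : ℕ} (hm : 1 ≤ m) (w : H) :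
    ⟪e m, B w⟫ = (m / (m + 1) : ℂ) * ⟪e (m + 1), w⟫ := by
  have hadj : B.adjoint (e m) = (m / (m + 1) : ℂ) • e (m + 1) := by
    refine eq_of_inner_right_of_dense_span hdense ?_
    rintro _ ⟨n, hn, rfl⟩
    rw [ContinuousLinearMap.adjoint_inner_right, inner_smul_right]
    obtain rfl | ⟨k, hk, rfl⟩ : n = 1 ∨ ∃ k, 1 ≤ k ∧ n = k + 1 :=
      (Nat.eq_or_lt_of_le hn).imp Eq.symm fun h => ⟨n - 1, by omega, by omega⟩
    · rw [hB1, inner_zero_left, horth 1 (m + 1) le_rfl (by omega), if_neg (by omega), mul_zero]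
    · rw [hB k hk, horth k m hk hm, horth (k + 1) (m + 1) (by omega) (by omega)]
      by_cases hkm : k = m
      · subst hkm
        simp only [if_true]
        push_cast
        field_simp
      · rw [if_neg hkm, if_neg (by omega), mul_zero]
  rw [← ContinuousLinearMap.adjoint_inner_left, hadj, inner_smul_left]
  simp

theorem hasSum_inner_toeplitz_mul
    (horth : ∀ m n : ℕ, 1 ≤ m → 1 ≤ n → ⟪e m, e n⟫ = if m = n then (m : ℂ) else 0)
    (hdense : Dense (Submodule.span ℂ (e '' {n : ℕ | 1 ≤ n}) : Set H))
    {T₁ T₂ : H →L[ℂ] H} {b c : ℤ → ℂ}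
    (hT₁ : ∀ m n : ℕ, 1 ≤ m → 1 ≤ n → ⟪e m, T₁ (e n)⟫ = (m : ℂ) * b ((m : ℤ) - n))
    (hT₂ : ∀ m n : ℕ, 1 ≤ m → 1 ≤ n → ⟪e m, T₂ (e n)⟫ = (m : ℂ) * c ((m : ℤ) - n))
    {m n : ℕ} (hm : 1 ≤ m) (hn : 1 ≤ n) :
    HasSum (fun k : ℕ => (m : ℂ) * (b ((m : ℤ) - (k + 1)) * c ((k : ℤ) + 1 - n)))
      ⟪e m, T₁ (T₂ (e n))⟫ := by
  have hnorm : ∀ k : ℕ, ⟪e (k + 1), e (k + 1)⟫ = (k : ℂ) + 1 := fun k => by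
    rw [horth _ _ (by omega) (by omega), if_pos rfl, Nat.cast_succ]
  have hv : Pairwise fun i j => ⟪e (i + 1), e (j + 1)⟫ = 0 := fun i j hij =>
    (horth _ _ (by omega) (by omega)).trans (if_neg (by omega))
  have hv0 : ∀ k, e (k + 1) ≠ 0 := fun k h =>
    Nat.cast_add_one_ne_zero (R := ℂ) k (by simpa [h] using (hnorm k).symm)
  have hsum := hasSum_inner_mul_inner_div_of_orthogonal hv hv0
    (by rwa [Set.range_comp_succ]) (T₁.adjoint (e m)) (T₂ (e n))
  simp only [ContinuousLinearMap.adjoint_inner_left] at hsum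
  refine hsum.congr_fun fun k => ?_
  have hk : (k : ℂ) + 1 ≠ 0 := Nat.cast_add_one_ne_zero k
  rw [hT₁ _ _ hm (by omega), hT₂ _ _ (by omega) hn, hnorm k]
  push_cast
  field_simp

theorem inner_backwardShift_toeplitz_mul_shift
    (horth : ∀ m n : ℕ, 1 ≤ m → 1 ≤ n → ⟪e m, e n⟫ = if m = n then (m : ℂ) else 0)
    (hdense : Dense (Submodule.span ℂ (e '' {n : ℕ | 1 ≤ n}) : Set H))
    {S B : H →L[ℂ] H} (hS : ∀ n : ℕ, 1 ≤ n → S (e n) = e (n + 1))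
    (hB1 : B (e 1) = 0) (hB : ∀ n : ℕ, 1 ≤ n → B (e (n + 1)) = e n)
    {T₁ T₂ : H →L[ℂ] H} {b c : ℤ → ℂ}
    (hT₁ : ∀ m n : ℕ, 1 ≤ m → 1 ≤ n → ⟪e m, T₁ (e n)⟫ = (m : ℂ) * b ((m : ℤ) - n))
    (hT₂ : ∀ m n : ℕ, 1 ≤ m → 1 ≤ n → ⟪e m, T₂ (e n)⟫ = (m : ℂ) * c ((m : ℤ) - n))
    {m n : ℕ} (hm : 1 ≤ m) (hn : 1 ≤ n) :
    ⟪e m, B (T₁ (T₂ (S (e n))))⟫ = ⟪e m, T₁ (T₂ (e n))⟫ + m * (b m * c (-n)) := by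
  set g : ℕ → ℂ := fun k => m * (b ((m : ℤ) - k) * c ((k : ℤ) - n)) with hg
  have hfull : HasSum g ⟪e m, B (T₁ (T₂ (S (e n))))⟫ := by
    rw [hS n hn, inner_backwardShift_right horth hdense hB1 hB hm]
    have hm1 : (m : ℂ) + 1 ≠ 0 := Nat.cast_add_one_ne_zero m
    refine ((hasSum_inner_toeplitz_mul horth hdense hT₁ hT₂ (m := m + 1) (n := n + 1)
      (by omega) (by omega)).mul_left (m / (m + 1) : ℂ)).congr_fun fun k => ?_
    simp only [hg, Nat.cast_add, Nat.cast_one, add_sub_add_right_eq_sub]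
    field_simp
  have htail : HasSum (fun k => g (k + 1)) ⟪e m, T₁ (T₂ (e n))⟫ := by
    simpa only [hg, Nat.cast_add, Nat.cast_one] using
      hasSum_inner_toeplitz_mul horth hdense hT₁ hT₂ hm hn
  have hshift := (hasSum_nat_add_iff' 1).2 hfull
  rw [Finset.sum_range_one] at hshift
  rw [htail.unique hshift, hg]
  simp

end DirichletSpace

theorem statement11 {H : Type*} [NormedAddCommGroup H] [InnerProductSpace ℂ H]
    [CompleteSpace H]
    (e : ℕ → H)
    (horth : ∀ m n : ℕ, 1 ≤ m → 1 ≤ n → ⟪e m, e n⟫ = if m = n then (m : ℂ) else 0)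
    (hdense : Dense (Submodule.span ℂ (e '' {n : ℕ | 1 ≤ n}) : Set H))
    (S B : H →L[ℂ] H)
    (hS : ∀ n : ℕ, 1 ≤ n → S (e n) = e (n + 1))
    (hB1 : B (e 1) = 0)
    (hB : ∀ n : ℕ, 1 ≤ n → B (e (n + 1)) = e n)
    (T₁ T₂ : H →L[ℂ] H) (b c : ℤ → ℂ)
    (hT₁ : ∀ m n : ℕ, 1 ≤ m → 1 ≤ n → ⟪e m, T₁ (e n)⟫ = (m : ℂ) * b ((m : ℤ) - n))
    (hT₂ : ∀ m n : ℕ, 1 ≤ m → 1 ≤ n → ⟪e m, T₂ (e n)⟫ = (m : ℂ) * c ((m : ℤ) - n)) :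
    B ∘L ((T₁ ∘L T₂) ∘L S) = T₁ ∘L T₂ ↔
      (∀ k : ℕ, 1 ≤ k → b k = 0) ∨ (∀ k : ℕ, 1 ≤ k → c (-(k : ℤ)) = 0) := by
  rw [ContinuousLinearMap.ext_iff_inner_of_dense_span hdense,
    ← forall_mul_eq_zero_iff (f := fun k : ℕ => b k) (g := fun k : ℕ => c (-k))]
  simp only [Set.forall_mem_image, ContinuousLinearMap.comp_apply]
  refine forall₂_congr fun m hm => forall₂_congr fun n hn => ?_
  have hm0 : (m : ℂ) ≠ 0 := by exact_mod_cast Nat.one_le_iff_ne_zero.1 hm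
  rw [inner_backwardShift_toeplitz_mul_shift horth hdense hS hB1 hB hT₁ hT₂ hm hn]
  simp [hm0]
end

section
/- Let T be a bounded operator on H that has Toeplitz matrix with coefficient sequence c : ℤ → ℂ. Then the associated harmonic symbol is dominated by the operator norm: for every z in the open unit disc 𝔻, |Σ_{k≥1} c(k)·z^k + Σ_{k≥0} c(−k)·conj(z)^k| ≤ ‖T‖ (i.e. ‖φ‖_∞ ≤ ‖T‖ where φ(z) = Σ_{k≥0} c(−k) conj(z)^k + Σ_{k≥1} c(k) z^k). -/
open scoped ComplexConjugate

local notation "⟪" x ", " y "⟫" => @inner ℂ _ _ x y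

/-!
Far out along the basis, where `m / n ≈ 1`, the matrix of `T` becomes the Toeplitz matrix
`(c (m - n))`: testing `T` on finitely supported vectors pushed to infinity shows that the Toeplitz
form `∑ conj (x m) * y n * c (m - n)` is bounded by `‖T‖ ‖x‖ ‖y‖`. Hence `‖c d‖ ≤ ‖T‖`, and for
`x = y = (z̄ⁿ)_{n < L}` the form tends to `(1 - |z|²)⁻¹ φ(z)` while `‖x‖²` tends to `(1 - |z|²)⁻¹`.
-/

open Filter Topology Finset

section ToeplitzForm

variable {H : Type*} [NormedAddCommGroup H] [InnerProductSpace ℂ H]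

lemma inner_sum_smul_map_sum_smul {ι : Type*} (A : H →L[ℂ] H) (v : ι → H) (a b : ι → ℂ)
    (s : Finset ι) :
    ⟪∑ m ∈ s, a m • v m, A (∑ n ∈ s, b n • v n)⟫
      = ∑ m ∈ s, ∑ n ∈ s, conj (a m) * b n * ⟪v m, A (v n)⟫ := by
  rw [map_sum, sum_inner]
  refine sum_congr rfl fun m _ => ?_
  rw [inner_smul_left, inner_sum, mul_sum]
  refine sum_congr rfl fun n _ => ?_
  rw [map_smul, inner_smul_right, mul_assoc]

lemma norm_mul_inner_map_sq_le (A : H →L[ℂ] H) (X Y : H) (t : ℂ) :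
    ‖t * ⟪X, A Y⟫‖ ^ 2 ≤ ‖A‖ ^ 2 * ‖t * ⟪X, X⟫‖ * ‖t * ⟪Y, Y⟫‖ := by
  have hcs : ‖⟪X, A Y⟫‖ ≤ ‖X‖ * (‖A‖ * ‖Y‖) :=
    (norm_inner_le_norm X (A Y)).trans (by gcongr; exact A.le_opNorm Y)
  simp only [norm_mul, inner_self_eq_norm_sq_to_K, norm_pow, RCLike.norm_ofReal, abs_norm]
  calc (‖t‖ * ‖⟪X, A Y⟫‖) ^ 2 ≤ (‖t‖ * (‖X‖ * (‖A‖ * ‖Y‖))) ^ 2 := by gcongr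
    _ = _ := by ring

/-- The weights `1 / (m + N + 1)` cancel the factor `m + N + 1` of the matrix entries
`(m + N + 1) κ(m - n)` up to `≈ 1 / N`, so `N ⟪X, A Y⟫` tends to the Toeplitz form of `κ`. -/
noncomputable def shiftedVector (e : ℕ → H) (s : Finset ℕ) (x : ℕ → ℂ) (N : ℕ) : H :=
  ∑ m ∈ s, (x m / (m + N + 1 : ℂ)) • e (m + N + 1)

lemma tendsto_mul_inner_shiftedVector (e : ℕ → H) (A : H →L[ℂ] H) (κ : ℤ → ℂ)
    (hA : ∀ m n : ℕ, 1 ≤ m → 1 ≤ n → ⟪e m, A (e n)⟫ = (m : ℂ) * κ ((m : ℤ) - n))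
    (s : Finset ℕ) (x y : ℕ → ℂ) :
    Tendsto (fun N : ℕ => (N : ℂ) * ⟪shiftedVector e s x N, A (shiftedVector e s y N)⟫) atTop
      (𝓝 (∑ m ∈ s, ∑ n ∈ s, conj (x m) * y n * κ ((m : ℤ) - n))) := by
  have hentry : ∀ N : ℕ, (N : ℂ) * ⟪shiftedVector e s x N, A (shiftedVector e s y N)⟫
      = ∑ m ∈ s, ∑ n ∈ s, conj (x m) * y n * κ ((m : ℤ) - n) * (N / (N + (n + 1))) := by
    intro N
    rw [shiftedVector, shiftedVector, inner_sum_smul_map_sum_smul, mul_sum]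
    refine sum_congr rfl fun m _ => ?_
    rw [mul_sum]
    refine sum_congr rfl fun n _ => ?_
    rw [hA _ _ (by omega) (by omega),
      show ((m + N + 1 : ℕ) : ℤ) - (n + N + 1 : ℕ) = m - n by push_cast; ring]
    simp only [map_div₀, map_add, map_one, Complex.conj_natCast]
    have hm : (m + N + 1 : ℂ) ≠ 0 := by norm_cast
    have hn : (N + (n + 1) : ℂ) ≠ 0 := by norm_cast
    have hn' : (n + N + 1 : ℂ) ≠ 0 := by norm_cast
    push_cast
    field_simp
    ring
  simp_rw [hentry]
  refine tendsto_finsetSum _ fun m _ => tendsto_finsetSum _ fun n _ => ?_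
  simpa using (tendsto_natCast_div_add_atTop ((n : ℂ) + 1)).const_mul
    (conj (x m) * y n * κ ((m : ℤ) - n))

lemma norm_toeplitzForm_sq_le (e : ℕ → H)
    (horth : ∀ m n : ℕ, 1 ≤ m → 1 ≤ n → ⟪e m, e n⟫ = if m = n then (m : ℂ) else 0)
    (T : H →L[ℂ] H) (c : ℤ → ℂ)
    (hT : ∀ m n : ℕ, 1 ≤ m → 1 ≤ n → ⟪e m, T (e n)⟫ = (m : ℂ) * c ((m : ℤ) - n))
    (s : Finset ℕ) (x y : ℕ → ℂ) :
    ‖∑ m ∈ s, ∑ n ∈ s, conj (x m) * y n * c ((m : ℤ) - n)‖ ^ 2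
      ≤ ‖T‖ ^ 2 * (∑ m ∈ s, ‖x m‖ ^ 2) * ∑ n ∈ s, ‖y n‖ ^ 2 := by
  have hid : ∀ m n : ℕ, 1 ≤ m → 1 ≤ n → ⟪e m, ContinuousLinearMap.id ℂ H (e n)⟫
      = (m : ℂ) * if (m : ℤ) - n = 0 then 1 else 0 := by
    intro m n hm hn
    simp [horth m n hm hn, sub_eq_zero]
  have hgram : ∀ x : ℕ → ℂ, ∑ m ∈ s, ∑ n ∈ s, conj (x m) * x n * (if (m : ℤ) - n = 0 then 1 else 0)
      = ((∑ m ∈ s, ‖x m‖ ^ 2 : ℝ) : ℂ) := by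
    intro x
    simp [sub_eq_zero, Complex.conj_mul']
  have hδ := tendsto_mul_inner_shiftedVector e _ (fun d => if d = 0 then 1 else 0) hid s
  have hlim := le_of_tendsto_of_tendsto'
    ((tendsto_mul_inner_shiftedVector e T c hT s x y).norm.pow 2)
    (((hδ x x).norm.const_mul (‖T‖ ^ 2)).mul (hδ y y).norm)
    fun N => norm_mul_inner_map_sq_le T _ _ _
  rwa [hgram, hgram, Complex.norm_real, Complex.norm_real, Real.norm_of_nonneg (by positivity),
    Real.norm_of_nonneg (by positivity)] at hlim

variable (e : ℕ → H)
    (horth : ∀ m n : ℕ, 1 ≤ m → 1 ≤ n → ⟪e m, e n⟫ = if m = n then (m : ℂ) else 0)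
    (T : H →L[ℂ] H) (c : ℤ → ℂ)
    (hT : ∀ m n : ℕ, 1 ≤ m → 1 ≤ n → ⟪e m, T (e n)⟫ = (m : ℂ) * c ((m : ℤ) - n))
include horth hT

lemma norm_coeff_le (d : ℤ) : ‖c d‖ ≤ ‖T‖ := by
  have ha : d.toNat ∈ range (d.natAbs + 1) := mem_range.2 (by omega)
  have hb : (-d).toNat ∈ range (d.natAbs + 1) := mem_range.2 (by omega)
  have h : ‖c d‖ ^ 2 ≤ ‖T‖ ^ 2 := by
    simpa [ha, hb, apply_ite (fun t : ℂ => ‖t‖ ^ 2)] using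
      norm_toeplitzForm_sq_le e horth T c hT (range (d.natAbs + 1))
        (fun m => if m = d.toNat then 1 else 0) (fun n => if n = (-d).toNat then 1 else 0)
  exact (pow_le_pow_iff_left₀ (norm_nonneg _) (norm_nonneg _) two_ne_zero).1 h

lemma norm_toeplitzForm_geom_le (z : ℂ) (L : ℕ) :
    ‖∑ m ∈ range L, ∑ n ∈ range L, z ^ m * conj z ^ n * c ((m : ℤ) - n)‖
      ≤ ‖T‖ * ∑ n ∈ range L, (‖z‖ ^ 2) ^ n := by
  have h := norm_toeplitzForm_sq_le e horth T c hT (range L) (fun n => conj z ^ n)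
    (fun n => conj z ^ n)
  simp only [map_pow, Complex.conj_conj, norm_pow, Complex.norm_conj,
    pow_right_comm _ _ 2] at h
  exact (pow_le_pow_iff_left₀ (norm_nonneg _) (by positivity) two_ne_zero).1
    (h.trans_eq (by ring))

end ToeplitzForm

lemma HasSum.tendsto_sum_range_sum_range {M : Type*} [AddCommMonoid M] [TopologicalSpace M]
    {f : ℕ × ℕ → M} {a : M} (h : HasSum f a) :
    Tendsto (fun L => ∑ m ∈ range L, ∑ n ∈ range L, f (m, n)) atTop (𝓝 a) := by
  simp_rw [← sum_product']
  refine h.comp (tendsto_atTop_finset_of_monotone (fun K L hKL => ?_) fun p => ?_)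
  · exact product_subset_product (range_mono hKL) (range_mono hKL)
  · exact ⟨p.1 + p.2 + 1, mem_product.2 ⟨mem_range.2 (by omega), mem_range.2 (by omega)⟩⟩

def diagonalOffsetEquiv : ℕ × ℤ ≃ ℕ × ℕ where
  toFun q := (q.1 + q.2.toNat, q.1 + (-q.2).toNat)
  invFun p := (min p.1 p.2, (p.1 : ℤ) - p.2)
  left_inv := by rintro ⟨p, k⟩; simp only [Prod.mk.injEq]; omega
  right_inv := by rintro ⟨m, n⟩; simp only [Prod.mk.injEq]; omega

noncomputable def harmonicSymbolTerm (c : ℤ → ℂ) (z : ℂ) (k : ℤ) : ℂ :=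
  c k * z ^ k.toNat * conj z ^ (-k).toNat

lemma harmonicSymbolTerm_neg_natCast (c : ℤ → ℂ) (z : ℂ) (n : ℕ) :
    harmonicSymbolTerm c z (-n) = c (-n) * conj z ^ n := by
  simp [harmonicSymbolTerm]

lemma harmonicSymbolTerm_natCast_add_one (c : ℤ → ℂ) (z : ℂ) (n : ℕ) :
    harmonicSymbolTerm c z (n + 1) = c (n + 1) * z ^ (n + 1) := by
  rw [harmonicSymbolTerm, Int.toNat_eq_zero.2 (by omega : -((n : ℤ) + 1) ≤ 0), pow_zero, mul_one]
  norm_cast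

/-- `φ(z) = ∑_{k ≥ 0} c(-k) z̄ᵏ + ∑_{k ≥ 1} c(k) zᵏ`, written as one sum over `k ∈ ℤ`. -/
noncomputable def harmonicSymbol (c : ℤ → ℂ) (z : ℂ) : ℂ :=
  ∑' k : ℤ, harmonicSymbolTerm c z k

section HarmonicSymbol

variable {c : ℤ → ℂ} {B : ℝ} (hc : ∀ k, ‖c k‖ ≤ B) {z : ℂ} (hz : ‖z‖ < 1)
include hc hz

lemma summable_norm_harmonicSymbolTerm : Summable fun k => ‖harmonicSymbolTerm c z k‖ := by
  have hgeom : Summable fun k : ℤ => B * ‖z‖ ^ k.natAbs := by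
    refine .mul_left B (.of_nat_of_neg ?_ ?_) <;>
      simpa using summable_geometric_of_lt_one (norm_nonneg z) hz
  refine hgeom.of_nonneg_of_le (fun k => norm_nonneg _) fun k => ?_
  rw [harmonicSymbolTerm, norm_mul, norm_mul, norm_pow, norm_pow, Complex.norm_conj, mul_assoc,
    ← pow_add, Int.toNat_add_toNat_neg_eq_natAbs]
  gcongr
  exact hc k

lemma hasSum_harmonicSymbol : HasSum (harmonicSymbolTerm c z) (harmonicSymbol c z) :=
  (summable_norm_harmonicSymbolTerm hc hz).of_norm.hasSum

lemma harmonicSymbol_eq :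
    harmonicSymbol c z
      = (∑' k : ℕ, c ((k : ℤ) + 1) * z ^ (k + 1)) + ∑' k : ℕ, c (-(k : ℤ)) * (conj z) ^ k := by
  have hg := (hasSum_harmonicSymbol hc hz).summable
  have hneg : HasSum (fun n : ℕ => harmonicSymbolTerm c z (-(n : ℤ)))
      (∑' k : ℕ, c (-(k : ℤ)) * (conj z) ^ k) := by
    have hs : Summable fun n : ℕ => harmonicSymbolTerm c z (-(n : ℤ)) :=
      hg.comp_injective (neg_injective.comp Nat.cast_injective)
    simpa only [harmonicSymbolTerm_neg_natCast] using hs.hasSum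
  have hpos : HasSum (fun n : ℕ => harmonicSymbolTerm c z (-(-((n : ℤ) + 1))))
      (∑' k : ℕ, c ((k : ℤ) + 1) * z ^ (k + 1)) := by
    have hs : Summable fun n : ℕ => harmonicSymbolTerm c z ((n : ℤ) + 1) :=
      hg.comp_injective ((add_left_injective (1 : ℤ)).comp Nat.cast_injective)
    simpa only [neg_neg, harmonicSymbolTerm_natCast_add_one] using hs.hasSum
  have h := HasSum.of_nat_of_neg_add_one (f := fun k => harmonicSymbolTerm c z (-k)) hneg hpos
  rw [add_comm]
  exact (hasSum_harmonicSymbol hc hz).unique ((Equiv.neg ℤ).hasSum_iff.1 h)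

lemma hasSum_toeplitzForm_geom :
    HasSum (fun p : ℕ × ℕ => z ^ p.1 * conj z ^ p.2 * c ((p.1 : ℤ) - p.2))
      (((1 - ‖z‖ ^ 2)⁻¹ : ℝ) * harmonicSymbol c z) := by
  have hr : ‖z‖ ^ 2 < 1 := pow_lt_one₀ (norm_nonneg z) hz two_ne_zero
  have ha : HasSum (fun p : ℕ => (((‖z‖ ^ 2) ^ p : ℝ) : ℂ)) ((1 - ‖z‖ ^ 2)⁻¹ : ℝ) :=
    Complex.hasSum_ofReal.2 (hasSum_geometric_of_lt_one (by positivity) hr)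
  have hterm := summable_norm_harmonicSymbolTerm hc hz
  have hnorm : Summable fun p : ℕ => ‖(((‖z‖ ^ 2) ^ p : ℝ) : ℂ)‖ := by
    simpa using summable_geometric_of_lt_one (by positivity) hr
  have hsum := summable_mul_of_summable_norm hnorm hterm
  have hprod := ha.mul (hasSum_harmonicSymbol hc hz) hsum
  -- Along the diagonal through `(k⁺, k⁻)`: `z^(p + k⁺) z̄^(p + k⁻) = |z|^(2p) z^(k⁺) z̄^(k⁻)`.
  have hreindex : (fun p : ℕ × ℕ => z ^ p.1 * conj z ^ p.2 * c ((p.1 : ℤ) - p.2)) ∘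
      diagonalOffsetEquiv = fun q => (((‖z‖ ^ 2) ^ q.1 : ℝ) : ℂ) * harmonicSymbolTerm c z q.2 := by
    ext ⟨p, k⟩
    simp only [Function.comp_apply, diagonalOffsetEquiv, Equiv.coe_fn_mk, harmonicSymbolTerm]
    rw [show ((p + k.toNat : ℕ) : ℤ) - (p + (-k).toNat : ℕ) = k by push_cast; omega, pow_add,
      pow_add]
    push_cast
    rw [← Complex.mul_conj']
    ring
  rw [← diagonalOffsetEquiv.hasSum_iff, hreindex]
  exact hprod

end HarmonicSymbol

theorem statement16_general {H : Type*} [NormedAddCommGroup H] [InnerProductSpace ℂ H]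
    (e : ℕ → H)
    (horth : ∀ m n : ℕ, 1 ≤ m → 1 ≤ n → ⟪e m, e n⟫ = if m = n then (m : ℂ) else 0)
    (T : H →L[ℂ] H) (c : ℤ → ℂ)
    (hT : ∀ m n : ℕ, 1 ≤ m → 1 ≤ n → ⟪e m, T (e n)⟫ = (m : ℂ) * c ((m : ℤ) - n)) :
    ∀ z ∈ Metric.ball (0 : ℂ) 1,
      ‖(∑' k : ℕ, c ((k : ℤ) + 1) * z ^ (k + 1)) + ∑' k : ℕ, c (-(k : ℤ)) * (conj z) ^ k‖
        ≤ ‖T‖ := by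
  intro z hz
  rw [mem_ball_zero_iff] at hz
  have hc := norm_coeff_le e horth T c hT
  have hr : ‖z‖ ^ 2 < 1 := pow_lt_one₀ (norm_nonneg z) hz two_ne_zero
  rw [← harmonicSymbol_eq hc hz]
  have hform := (hasSum_toeplitzForm_geom hc hz).tendsto_sum_range_sum_range.norm
  have hgeom := ((hasSum_geometric_of_lt_one (by positivity) hr).tendsto_sum_nat).const_mul ‖T‖
  have hle := le_of_tendsto_of_tendsto' hform hgeom (norm_toeplitzForm_geom_le e horth T c hT z)
  rw [norm_mul, Complex.norm_real, Real.norm_of_nonneg (by simp [hr.le]), mul_comm] at hle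
  exact le_of_mul_le_mul_right hle (by simp [hr])

theorem statement16 {H : Type*} [NormedAddCommGroup H] [InnerProductSpace ℂ H]
    [CompleteSpace H]
    (e : ℕ → H)
    (horth : ∀ m n : ℕ, 1 ≤ m → 1 ≤ n → ⟪e m, e n⟫ = if m = n then (m : ℂ) else 0)
    (hdense : Dense (Submodule.span ℂ (e '' {n : ℕ | 1 ≤ n}) : Set H))
    (T : H →L[ℂ] H) (c : ℤ → ℂ)
    (hT : ∀ m n : ℕ, 1 ≤ m → 1 ≤ n → ⟪e m, T (e n)⟫ = (m : ℂ) * c ((m : ℤ) - n)) :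
    ∀ z ∈ Metric.ball (0 : ℂ) 1,
      ‖(∑' k : ℕ, c ((k : ℤ) + 1) * z ^ (k + 1)) + ∑' k : ℕ, c (-(k : ℤ)) * (conj z) ^ k‖
        ≤ ‖T‖ :=
  statement16_general e horth T c hT
end
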